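/- In the setup of the Kawamata blow-up Φ: F_1 → wP^7 of the Tom centre P_s of a codimension 4 Fano 3-fold X of Tom type, with bottom weights δ_1, δ_2, δ_3, δ_4 attached to the ideal variables y_1,...,y_4 as defined by minimizing the powers of the exceptional parameter t appearing in the pullback of the unprojection equation s y_j = g_j, one has δ_4 ≥ d_4 (and analogously δ_j ≥ d_j for each j): every monomial of the degree r + d_4 polynomial g_4(x_1,x_2,x_3,y_1,y_2,y_3,y_4) picks up a factor t^{k/r} with k ≥ r + d_4 under Φ. -/
import Mathlib


open MvPolynomial

/-- Variables of the coordinate ring of `wP⁶(a,b,c,d₁,d₂,d₃,d₄)`: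
indices `0,1,2 ↦ x₁,x₂,x₃` (the orbinates) and `3,4,5,6 ↦ y₁,…,y₄`
(the ideal variables). -/
def yIdx (j : Fin 4) : Fin 7 := ⟨j.val + 3, by omega⟩

/-- The power of `t^{1/r}` picked up by the monomial with exponent vector `e` under
the blow-up `Φ : F₁ → wP⁷` whose bottom weights are `a,b,c` on the orbinates and
`δ₁,…,δ₄` on the ideal variables. -/
def tExp (a b c : ℕ) (δ : Fin 4 → ℕ) (e : Fin 7 →₀ ℕ) : ℕ :=
  ∑ i : Fin 7, (![a, b, c, δ 0, δ 1, δ 2, δ 3] i) * e i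

/-- Explicit form of `tExp`. -/
lemma tExp_eq (a b c : ℕ) (δ : Fin 4 → ℕ) (e : Fin 7 →₀ ℕ) :
    tExp a b c δ e = a * e 0 + b * e 1 + c * e 2
      + δ 0 * e 3 + δ 1 * e 4 + δ 2 * e 5 + δ 3 * e 6 := by
  have h5 : (![a, b, c, δ 0, δ 1, δ 2, δ 3] : Fin 7 → ℕ) 5 = δ 2 := rfl
  have h6 : (![a, b, c, δ 0, δ 1, δ 2, δ 3] : Fin 7 → ℕ) 6 = δ 3 := rfl
  simp [tExp, Fin.sum_univ_seven, h5, h6]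

/-- Explicit form of the weighted degree. -/
lemma weight_eq_sum (w : Fin 7 → ℕ) (e : Fin 7 →₀ ℕ) :
    (Finsupp.weight w) e = w 0 * e 0 + w 1 * e 1 + w 2 * e 2 + w 3 * e 3
      + w 4 * e 4 + w 5 * e 5 + w 6 * e 6 := by
  rw [Finsupp.weight_apply, Finsupp.sum_fintype]
  · rw [Fin.sum_univ_seven]
    simp [mul_comm]
  · intro i; exact zero_smul _ _

/-- The core arithmetic lemma: if `j` is a "bad" index (`δ j < d j`) with minimal `δ`
among bad indices, and `e` is a monomial of `g j` avoiding `y_j` achieving `tExp = δ j`,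
then the monomial is exactly some single `y_i` with `δ i = δ j` and `d i = r + d j`. -/
lemma core_arith (r : ℕ) (d δ f : Fin 4 → ℕ) (A : ℕ) (j : Fin 4)
    (hδpos : ∀ i, 1 ≤ δ i) (hfj : f j = 0)
    (hmin : ∀ i, δ i < d i → δ j ≤ δ i)
    (hbad : δ j < d j)
    (hT : δ j = A + ∑ i, δ i * f i)
    (hW : A + ∑ i, d i * f i = r + d j) :
    ∃ i, δ i = δ j ∧ d i = r + d j := by
  -- Step 1: some bad index appears in the monomial
  have h1 : ∃ i, δ i < d i ∧ 1 ≤ f i := by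
    by_contra h
    push_neg at h
    have hle : ∑ i, d i * f i ≤ ∑ i, δ i * f i := by
      apply Finset.sum_le_sum
      intro i _
      by_cases hc : δ i < d i
      · have hfi0 : f i = 0 := by have := h i hc; omega
        simp [hfi0]
      · exact Nat.mul_le_mul_right _ (le_of_not_gt hc)
    linarith
  obtain ⟨i, hib, hfi⟩ := h1
  have hδji : δ j ≤ δ i := hmin i hib
  have hsum_ge : δ i * f i ≤ ∑ k, δ k * f k :=
    Finset.single_le_sum (f := fun k => δ k * f k) (fun k _ => Nat.zero_le _) (Finset.mem_univ i)
  have hPge : δ i ≤ δ i * f i := Nat.le_mul_of_pos_right _ hfi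
  have hPle : δ i * f i ≤ δ j := by linarith
  have hδeq : δ i = δ j := le_antisymm (by linarith) hδji
  have hP : δ i * f i = δ i := le_antisymm (by linarith) hPge
  have hfi1 : f i = 1 :=
    Nat.eq_of_mul_eq_mul_left (hδpos i) (by rw [hP, mul_one])
  have hS : ∑ k, δ k * f k = δ j := le_antisymm (by linarith) (by linarith)
  have hA : A = 0 := by linarith
  -- all other exponents vanish
  have herase : ∑ k ∈ Finset.univ.erase i, δ k * f k = 0 := by
    have h2 := Finset.add_sum_erase Finset.univ (fun k => δ k * f k) (Finset.mem_univ i)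
    have : δ i * f i = δ j := by rw [hP, hδeq]
    omega
  have hzero : ∀ k, k ≠ i → f k = 0 := by
    intro k hk
    have hk' : δ k * f k = 0 := by
      have := (Finset.sum_eq_zero_iff).mp herase k
        (Finset.mem_erase.mpr ⟨hk, Finset.mem_univ k⟩)
      exact this
    rcases Nat.mul_eq_zero.mp hk' with h | h
    · exact absurd h (by have := hδpos k; omega)
    · exact h
  have hSd : ∑ k, d k * f k = d i := by
    rw [← Finset.add_sum_erase Finset.univ (fun k => d k * f k) (Finset.mem_univ i)]
    have hz : ∑ k ∈ Finset.univ.erase i, d k * f k = 0 :=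
      Finset.sum_eq_zero fun k hk => by
        rw [hzero k (Finset.mem_erase.mp hk).1, mul_zero]
    simp [hz, hfi1]
  exact ⟨i, hδeq, by omega⟩

/-- **Lemma (δⱼ ≥ dⱼ)**: in the setup of the Kawamata blow-up
`Φ : F₁ → wP⁷(a,b,c,d₁,d₂,d₃,d₄,r)` of the Tom centre `P_s` of a codimension 4 Fano
3-fold of Tom type, with unprojection equations `s yⱼ = gⱼ` (`gⱼ` homogeneous of
degree `r + dⱼ`, not involving `s`) and bottom weights `δⱼ` defined as the minimal
`t^{1/r}`-exponent among the monomials of the pullback of `gⱼ` not involving `yⱼ`,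
one has `δ₄ ≥ d₄` (and analogously `δⱼ ≥ dⱼ` for each `j`): every monomial of `g₄`
picks up a factor `t^{k/r}` with `k ≥ r + d₄` under `Φ`. -/
theorem delta_ge_ideal_weight
    (a b c r : ℕ) (d δ : Fin 4 → ℕ)
    (ha : 1 ≤ a) (hb : 1 ≤ b) (hc : 1 ≤ c) (hr : 1 ≤ r)
    (hd : ∀ j, 1 ≤ d j) (hδpos : ∀ j, 1 ≤ δ j)
    (g : Fin 4 → MvPolynomial (Fin 7) ℂ)
    (hg : ∀ j, (g j).IsWeightedHomogeneous
      (![a, b, c, d 0, d 1, d 2, d 3]) (r + d j))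
    (hsupp : ∀ j, ∃ e ∈ (g j).support, e (yIdx j) = 0)
    (hδ : ∀ j, δ j =
      sInf {k : ℕ | ∃ e ∈ (g j).support, e (yIdx j) = 0 ∧ k = tExp a b c δ e}) :
    d 3 ≤ δ 3 ∧ (∀ j, d j ≤ δ j) ∧
      ∀ e ∈ (g 3).support, r + d 3 ≤ tExp a b c δ e := by
  -- the weighted degree of any monomial in the support of `g j`
  have hwd : ∀ j, ∀ e ∈ (g j).support,
      a * e 0 + b * e 1 + c * e 2 + d 0 * e 3 + d 1 * e 4 + d 2 * e 5 + d 3 * e 6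
        = r + d j := by
    intro j e he
    have := hg j (mem_support_iff.mp he)
    rw [weight_eq_sum] at this
    simpa using this
  -- witnesses achieving the infimum
  have hwit : ∀ j, ∃ e ∈ (g j).support, e (yIdx j) = 0 ∧ δ j = tExp a b c δ e := by
    intro j
    have hne : {k : ℕ | ∃ e ∈ (g j).support, e (yIdx j) = 0 ∧ k = tExp a b c δ e}.Nonempty := by
      obtain ⟨e, he, h0⟩ := hsupp j
      exact ⟨tExp a b c δ e, e, he, h0, rfl⟩
    have := Nat.sInf_mem hne
    rw [← hδ j] at this
    obtain ⟨e, he, h0, hk⟩ := this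
    exact ⟨e, he, h0, hk⟩
  -- main claim
  have H : ∀ j, d j ≤ δ j := by
    by_contra h
    push_neg at h
    obtain ⟨j0, hj0⟩ := h
    set B : Finset (Fin 4) := Finset.univ.filter (fun j => δ j < d j) with hB
    have hBne : B.Nonempty := ⟨j0, by simp [hB, hj0]⟩
    obtain ⟨j1, hj1B, hj1min⟩ := Finset.exists_min_image B δ hBne
    set S : Finset (Fin 4) := B.filter (fun i => δ i = δ j1) with hSdef
    have hSne : S.Nonempty := ⟨j1, by simp [hSdef, hj1B]⟩
    obtain ⟨j, hjS, hjmax⟩ := Finset.exists_max_image S d hSne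
    have hjB : j ∈ B := (Finset.mem_filter.mp hjS).1
    have hjδ : δ j = δ j1 := (Finset.mem_filter.mp hjS).2
    have hjbad : δ j < d j := by
      have := Finset.mem_filter.mp hjB; exact this.2
    have hmin : ∀ i, δ i < d i → δ j ≤ δ i := by
      intro i hi
      have hiB : i ∈ B := Finset.mem_filter.mpr ⟨Finset.mem_univ i, hi⟩
      rw [hjδ]; exact hj1min i hiB
    obtain ⟨e, he, h0, hk⟩ := hwit j
    -- set up core_arith
    set f : Fin 4 → ℕ := fun i => e (yIdx i) with hf
    have hy0 : yIdx 0 = (3 : Fin 7) := rfl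
    have hy1 : yIdx 1 = (4 : Fin 7) := rfl
    have hy2 : yIdx 2 = (5 : Fin 7) := rfl
    have hy3 : yIdx 3 = (6 : Fin 7) := rfl
    have hT : δ j = (a * e 0 + b * e 1 + c * e 2) + ∑ i : Fin 4, δ i * f i := by
      rw [hk, tExp_eq, Fin.sum_univ_four]
      simp only [hf, hy0, hy1, hy2, hy3]
      ring
    have hW : (a * e 0 + b * e 1 + c * e 2) + ∑ i : Fin 4, d i * f i = r + d j := by
      rw [Fin.sum_univ_four]
      simp only [hf, hy0, hy1, hy2, hy3]
      have := hwd j e he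
      linarith
    obtain ⟨i, hδeq, hdi⟩ := core_arith r d δ f _ j hδpos h0 hmin hjbad hT hW
    have hibad : δ i < d i := by omega
    have hiS : i ∈ S := Finset.mem_filter.mpr
      ⟨Finset.mem_filter.mpr ⟨Finset.mem_univ i, hibad⟩, by rw [hδeq, hjδ]⟩
    have := hjmax i hiS
    omega
  refine ⟨H 3, H, ?_⟩
  intro e he
  have hW := hwd 3 e he
  rw [tExp_eq]
  have h0 := Nat.mul_le_mul_right (e 3) (H 0)
  have h1 := Nat.mul_le_mul_right (e 4) (H 1)
  have h2 := Nat.mul_le_mul_right (e 5) (H 2)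
  have h3 := Nat.mul_le_mul_right (e 6) (H 3)
  linarith
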